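/- For every z ∈ V and every ρ ∈ Rec(z): the sandpile ρ − δ_z is stabilizable, and the sandpile ρ is not stabilizable. -/

import Mathlib

open scoped BigOperators
open Classical Filter

noncomputable section

namespace ThresholdState

variable {V : Type*} [Fintype V] [DecidableEq V]

/-- `A i j` is the number of directed edges from `i` to `j`. -/
def outdeg (A : V → V → ℕ) (i : V) : ℕ := ∑ j, A i j

def indeg (A : V → V → ℕ) (i : V) : ℕ := ∑ j, A j i

/-- Eulerian: out-degree equals in-degree at every vertex. -/
def Eulerian (A : V → V → ℕ) : Prop := ∀ i, outdeg A i = indeg A i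

/-- (Strongly) connected multigraph. -/
def Connected (A : V → V → ℕ) : Prop :=
  ∀ i j : V, Relation.ReflTransGen (fun a b => 0 < A a b) i j

def deg (A : V → V → ℕ) (i : V) : ℕ := outdeg A i

/-- Graph Laplacian: `Δu(i) = -deg(i)·u(i) + Σ_{e incoming to i} u(e⁻)`. -/
def lap (A : V → V → ℕ) (u : V → ℤ) (i : V) : ℤ :=
  -(deg A i : ℤ) * u i + ∑ j, (A j i : ℤ) * u j

def delta (z : V) : V → ℤ := fun j => if j = z then 1 else 0

/-- Toppling vertex `i`: replace `s` by `s + Δδ_i`. -/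
def toppleAt (A : V → V → ℕ) (s : V → ℤ) (i : V) : V → ℤ :=
  fun j => s j + lap A (delta i) j

def applySeq (A : V → V → ℕ) (s : V → ℤ) (l : List V) : V → ℤ :=
  l.foldl (toppleAt A) s

/-- A legal toppling sequence (avoiding the forbidden set `F`): each toppled
vertex is unstable when toppled and does not lie in `F`. -/
def ValidSeq (A : V → V → ℕ) (F : V → Prop) : (V → ℤ) → List V → Prop
  | _, [] => True
  | s, i :: l => ¬ F i ∧ (deg A i : ℤ) ≤ s i ∧ ValidSeq A F (toppleAt A s i) l

/-- Stable at every non-forbidden vertex. -/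
def StableOff (A : V → V → ℕ) (F : V → Prop) (s : V → ℤ) : Prop :=
  ∀ i, ¬ F i → s i ≤ (deg A i : ℤ) - 1

def StabilizesTo (A : V → V → ℕ) (F : V → Prop) (s : V → ℤ) (l : List V) : Prop :=
  ValidSeq A F s l ∧ StableOff A F (applySeq A s l)

def StabilizableVia (A : V → V → ℕ) (F : V → Prop) (s : V → ℤ) : Prop :=
  ∃ l, StabilizesTo A F s l

/-- Stabilizable with no forbidden vertices. -/
def Stabilizable (A : V → V → ℕ) (s : V → ℤ) : Prop :=
  StabilizableVia A (fun _ => False) s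

def stabSeq (A : V → V → ℕ) (F : V → Prop) (s : V → ℤ) : List V :=
  if h : StabilizableVia A F s then h.choose else []

def stabilizeVia (A : V → V → ℕ) (F : V → Prop) (s : V → ℤ) : V → ℤ :=
  applySeq A s (stabSeq A F s)

/-- Odometer: number of topplings at each vertex (`0` everywhere if not stabilizable). -/
def odometerVia (A : V → V → ℕ) (F : V → Prop) (s : V → ℤ) : V → ℕ :=
  fun i => (stabSeq A F s).count i

def sinkStabilize (A : V → V → ℕ) (z : V) (s : V → ℤ) : V → ℤ :=
  stabilizeVia A (fun i => i = z) s

def sinkOdometer (A : V → V → ℕ) (z : V) (s : V → ℤ) : V → ℕ :=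
  odometerVia A (fun i => i = z) s

/-- `ρ` is `z`-recurrent (Dhar's burning test): `ρ(z) = deg z`, `ρ(i) ≤ deg i - 1`
off the sink, and every site other than `z` topples exactly once in the
stabilization of `ρ + Δδ_z` with sink `z`. -/
def ZRec (A : V → V → ℕ) (z : V) (ρ : V → ℤ) : Prop :=
  ρ z = (deg A z : ℤ) ∧ (∀ i, i ≠ z → ρ i ≤ (deg A i : ℤ) - 1) ∧
  ∃ l : List V, StabilizesTo A (fun i => i = z) (fun j => ρ j + lap A (delta z) j) l ∧
    ∀ i, i ≠ z → l.count i = 1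

/-- `κ` = number of `z`-recurrent sandpiles. -/
def kappa (A : V → V → ℕ) (z : V) : ℕ := Nat.card {ρ : V → ℤ // ZRec A z ρ}

def totalMass (s : V → ℤ) : ℤ := ∑ i, s i

/-- Open addition operator `â_i` (with sink `z`). -/
def openAdd (A : V → V → ℕ) (z i : V) (ρ : V → ℤ) : V → ℤ :=
  fun j => if j = z then (deg A z : ℤ) else sinkStabilize A z (fun k => ρ k + delta i k) j

/-- `â_i⁻¹` on `Rec(z)`. -/
def openAddInv (A : V → V → ℕ) (z i : V) (ρ : V → ℤ) : V → ℤ :=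
  if h : ∃ ρ', ZRec A z ρ' ∧ openAdd A z i ρ' = ρ then h.choose else ρ

/-- Burst size `av_{i→z}(ρ) = |â_i⁻¹ρ| - |ρ| + 1`. -/
def burst (A : V → V → ℕ) (z i : V) (ρ : V → ℤ) : ℤ :=
  totalMass (openAddInv A z i ρ) - totalMass ρ + 1

/-- The `z`-recurrent decomposition `s = ρ + m·δ_z + Δv` with `ρ ∈ Rec(z)`, `v(z)=0`. -/
def ZDecomp (A : V → V → ℕ) (z : V) (s ρ : V → ℤ) (m : ℤ) (v : V → ℤ) : Prop :=
  ZRec A z ρ ∧ v z = 0 ∧ ∀ j, s j = ρ j + m * delta z j + lap A v j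

/-- `R_z(s)`: the `z`-recurrent representative of `s`. -/
def Rz (A : V → V → ℕ) (z : V) (s : V → ℤ) : V → ℤ :=
  if h : ∃ ρ, ∃ m, ∃ v, ZDecomp A z s ρ m v then h.choose else s

/-- `m_z(s)`: the integer in the `z`-recurrent decomposition of `s`. -/
def mz (A : V → V → ℕ) (z : V) (s : V → ℤ) : ℤ :=
  if h : ∃ m, ∃ ρ, ∃ v, ZDecomp A z s ρ m v then h.choose else 0

/-- Closed addition operator `a_i`. -/
def closedAdd (A : V → V → ℕ) (i : V) (s : V → ℤ) : V → ℤ :=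
  if Stabilizable A (fun j => s j + delta i j) then
    stabilizeVia A (fun _ => False) (fun j => s j + delta i j)
  else fun j => s j + delta i j

/-- The closed chain after making the additions listed in `w` (in order). -/
def chain (A : V → V → ℕ) (s0 : V → ℤ) (w : List V) : V → ℤ :=
  w.foldl (fun s i => closedAdd A i s) s0

/-- `w` is a threshold word for `s0`: the chain first becomes non-stabilizable
exactly after the additions in `w`, i.e. `τ = |w|` on the cylinder of `w`. -/
def IsThresholdWord (A : V → V → ℕ) (s0 : V → ℤ) (w : List V) : Prop :=
  ¬ Stabilizable A (chain A s0 w) ∧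
  ∀ w' : List V, w' <+: w → w' ≠ w → Stabilizable A (chain A s0 w')

def wordProb (α : V → ℝ) (w : List V) : ℝ := (w.map α).prod

/-- `P_{s0}(E at the threshold time)`: total probability of the (disjoint)
cylinders of threshold words satisfying `E`. -/
def thresholdProb (A : V → V → ℕ) (α : V → ℝ) (s0 : V → ℤ) (E : List V → Prop) : ℝ :=
  ∑' w : List V, if IsThresholdWord A s0 w ∧ E w then wordProb α w else 0

/-- `E_{s0}[f at the threshold time]`. -/
def thresholdExp (A : V → V → ℕ) (α : V → ℝ) (s0 : V → ℤ) (f : List V → ℝ) : ℝ :=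
  ∑' w : List V, if IsThresholdWord A s0 w then wordProb α w * f w else 0

end ThresholdState


/-!
A `z`-recurrent `ρ` is stable off `z` and carries exactly `deg z` chips at `z`, so `ρ - δ_z` is
already stable. Toppling `z` in `ρ` and then running the burning sequence of `ρ + Δδ_z` topples
every vertex exactly once; on an Eulerian graph `Δ𝟙 = 0`, so this legal sequence returns to `ρ`.
Repeating it yields legal toppling sequences from `ρ` that topple `z` arbitrarily often, which the
least action principle forbids for a stabilizable sandpile.
-/

namespace ThresholdState

variable {V : Type*} [Fintype V] {A : V → V → ℕ}

lemma lap_add (u v : V → ℤ) (i : V) : lap A (u + v) i = lap A u i + lap A v i := by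
  simp only [lap, Pi.add_apply, mul_add, Finset.sum_add_distrib]
  ring

lemma lap_const (hA : Eulerian A) (c : ℤ) (i : V) : lap A (fun _ => c) i = 0 := by
  have hin : ∑ j, (A j i : ℤ) = deg A i := by
    rw [deg, hA i, indeg]
    push_cast
    rfl
  simp only [lap, ← Finset.sum_mul, hin]
  ring

lemma lap_nonneg_of_nonneg {u : V → ℤ} (hu : 0 ≤ u) {i : V} (hi : u i = 0) :
    0 ≤ lap A u i := by
  simp only [lap, hi, mul_zero, zero_add]
  exact Finset.sum_nonneg fun j _ => mul_nonneg (Int.natCast_nonneg _) (hu j)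

variable [DecidableEq V]

lemma lap_delta_of_ne {i j : V} (h : j ≠ i) : lap A (delta i) j = A i j := by
  simp [lap, delta, h]

lemma toppleAt_comm (s : V → ℤ) (i j : V) :
    toppleAt A (toppleAt A s i) j = toppleAt A (toppleAt A s j) i :=
  funext fun k => add_right_comm (s k) _ _

lemma applySeq_apply (s : V → ℤ) (l : List V) (j : V) :
    applySeq A s l j = s j + lap A (fun i => (l.count i : ℤ)) j := by
  induction l generalizing s with
  | nil => simp [applySeq, lap]
  | cons i t ih =>
    have hcount : (fun k => ((i :: t).count k : ℤ)) = (fun k => (t.count k : ℤ)) + delta i := by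
      funext k
      by_cases h : k = i
      · subst h
        simp [delta]
      · simp [delta, h, Ne.symm h]
    rw [hcount, lap_add]
    simp only [applySeq, List.foldl_cons] at ih ⊢
    rw [ih, toppleAt]
    ring

lemma applySeq_append (s : V → ℤ) (l₁ l₂ : List V) :
    applySeq A s (l₁ ++ l₂) = applySeq A (applySeq A s l₁) l₂ :=
  List.foldl_append

lemma applySeq_eq_of_perm (s : V → ℤ) {l₁ l₂ : List V} (h : l₁.Perm l₂) :
    applySeq A s l₁ = applySeq A s l₂ := by
  funext j
  simp only [applySeq_apply, h.count_eq]

lemma validSeq_append {F : V → Prop} {s : V → ℤ} {l₁ l₂ : List V} :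
    ValidSeq A F s (l₁ ++ l₂) ↔ ValidSeq A F s l₁ ∧ ValidSeq A F (applySeq A s l₁) l₂ := by
  induction l₁ generalizing s with
  | nil => simp [ValidSeq, applySeq]
  | cons i t ih =>
    simp only [List.cons_append, ValidSeq, ih]
    tauto

namespace ValidSeq

variable {F : V → Prop} {s : V → ℤ} {l : List V}

lemma not_forbidden_of_mem (h : ValidSeq A F s l) {i : V} (hi : i ∈ l) : ¬ F i := by
  induction l generalizing s with
  | nil => simp at hi
  | cons j t ih =>
    rcases List.mem_cons.mp hi with rfl | hi
    exacts [h.1, ih h.2.2 hi]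

lemma mono {G : V → Prop} (hGF : ∀ i, G i → F i) (h : ValidSeq A F s l) :
    ValidSeq A G s l := by
  induction l generalizing s with
  | nil => trivial
  | cons i t ih => exact ⟨fun hG => h.1 (hGF i hG), h.2.1, ih h.2.2⟩

/-- Toppling `i` earlier only adds chips to the vertices toppled before the first `i`. -/
lemma topple_of_append_cons {l₁ l₂ : List V} {i : V} (hi : i ∉ l₁)
    (h : ValidSeq A F s (l₁ ++ i :: l₂)) : ValidSeq A F (toppleAt A s i) (l₁ ++ l₂) := by
  induction l₁ generalizing s with
  | nil => exact h.2.2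
  | cons j t ih =>
    obtain ⟨hFj, hsj, hrest⟩ := h
    have hji : j ≠ i := fun hji => hi (hji ▸ List.mem_cons_self)
    refine ⟨hFj, ?_, ?_⟩
    · have := lap_delta_of_ne (A := A) hji
      simp only [toppleAt, this]
      omega
    · have := ih (fun hit => hi (List.mem_cons_of_mem j hit)) hrest
      rwa [toppleAt_comm] at this

lemma topple_erase {i : V} (h : ValidSeq A F s l) (hi : i ∈ l) :
    ValidSeq A F (toppleAt A s i) (l.erase i) := by
  obtain ⟨l₁, l₂, hil₁, rfl, herase⟩ := List.exists_erase_eq hi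
  rw [herase]
  exact topple_of_append_cons hil₁ h

lemma flatten_replicate {c : List V} (hc : ValidSeq A F s c) (hret : applySeq A s c = s)
    (k : ℕ) : ValidSeq A F s (List.replicate k c).flatten := by
  induction k with
  | zero => trivial
  | succ k ih =>
    rw [List.replicate_succ, List.flatten_cons, validSeq_append, hret]
    exact ⟨hc, ih⟩

end ValidSeq

/-- The least action principle. -/
theorem count_le_of_validSeq_of_stabilizesTo {F : V → Prop} {s : V → ℤ} {l m : List V}
    (hl : ValidSeq A F s l) (hm : StabilizesTo A F s m) (k : V) :
    l.count k ≤ m.count k := by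
  induction l generalizing s m with
  | nil => simp
  | cons i t ih =>
    obtain ⟨hFi, hsi, ht⟩ := hl
    obtain ⟨hmv, hms⟩ := hm
    have him : i ∈ m := by
      by_contra him
      have hzero : (fun j => (m.count j : ℤ)) i = 0 := by simp [List.count_eq_zero.mpr him]
      have := lap_nonneg_of_nonneg (A := A) (fun j => Int.natCast_nonneg (m.count j)) hzero
      have := hms i hFi
      rw [applySeq_apply] at this
      omega
    have hperm := List.perm_cons_erase him
    have hstab : StabilizesTo A F (toppleAt A s i) (m.erase i) := by
      refine ⟨hmv.topple_erase him, ?_⟩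
      rwa [applySeq_eq_of_perm s hperm] at hms
    have := ih ht hstab
    rw [hperm.count_eq, List.count_cons, List.count_cons]
    omega

theorem not_stabilizableVia_of_cycle {F : V → Prop} {s : V → ℤ} {c : List V}
    (hc : ValidSeq A F s c) (hret : applySeq A s c = s) (hne : c ≠ []) :
    ¬ StabilizableVia A F s := by
  rintro ⟨m, hm⟩
  obtain ⟨i, hi⟩ := List.exists_mem_of_ne_nil c hne
  have hle := count_le_of_validSeq_of_stabilizesTo
    (hc.flatten_replicate hret (m.count i + 1)) hm i
  have hpos : 0 < c.count i := List.count_pos_iff.mpr hi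
  simp only [List.count_flatten, List.map_replicate, List.sum_replicate, smul_eq_mul] at hle
  nlinarith

namespace ZRec

variable {z : V} {ρ : V → ℤ}

lemma stabilizable_sub_delta (hρ : ZRec A z ρ) :
    Stabilizable A (fun j => ρ j - delta z j) := by
  refine ⟨[], trivial, fun i _ => ?_⟩
  by_cases hi : i = z
  · subst hi
    simp [applySeq, delta, hρ.1]
  · simpa [applySeq, delta, hi] using hρ.2.1 i hi

lemma not_stabilizable (hA : Eulerian A) (hρ : ZRec A z ρ) : ¬ Stabilizable A ρ := by
  obtain ⟨hz, -, l, ⟨hl, -⟩, hcount⟩ := hρ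
  have hzl : z ∉ l := fun hmem => hl.not_forbidden_of_mem hmem rfl
  have hret : applySeq A ρ (z :: l) = ρ := by
    have hone : (fun i => ((z :: l).count i : ℤ)) = fun _ => 1 := by
      funext i
      by_cases hi : i = z
      · subst hi
        simp [List.count_eq_zero.mpr hzl]
      · simp [hcount i hi, Ne.symm hi]
    funext j
    rw [applySeq_apply, hone, lap_const hA, add_zero]
  have hcycle : ValidSeq A (fun _ => False) ρ (z :: l) :=
    ⟨not_false, hz.ge, hl.mono fun _ => False.elim⟩
  exact not_stabilizableVia_of_cycle hcycle hret (List.cons_ne_nil z l)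

end ZRec

end ThresholdState

open ThresholdState in
theorem statement_15_general {V : Type*} [Fintype V] [DecidableEq V]
    (A : V → V → ℕ) (hEul : Eulerian A)
    (z : V) (ρ : V → ℤ) (hρ : ZRec A z ρ) :
    Stabilizable A (fun j => ρ j - delta z j) ∧ ¬ Stabilizable A ρ :=
  ⟨hρ.stabilizable_sub_delta, hρ.not_stabilizable hEul⟩

open ThresholdState in
/-- For every `z`-recurrent `ρ`: `ρ - δ_z` is stabilizable and `ρ` is not. -/
theorem statement_15 {V : Type*} [Fintype V] [DecidableEq V]
    (A : V → V → ℕ) (hEul : Eulerian A) (hConn : Connected A)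
    (z : V) (ρ : V → ℤ) (hρ : ZRec A z ρ) :
    Stabilizable A (fun j => ρ j - delta z j) ∧ ¬ Stabilizable A ρ :=
  statement_15_general A hEul z ρ hρ
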